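/- Let u and v be integers with min(u,v) ≥ 2, s = min(u,v), t = max(u,v), and in ℝ set p₊ = s√t + √(s(4+uv)), p₋ = −s√t + √(s(4+uv)), q₊ = 2 + uv + √(uv(4+uv)) and q₋ = 2 + uv − √(uv(4+uv)). Then for every natural number n, μ(𝒯^{(u,v)}(2n+2)) = (p₊ · (q₊)^{n+1} + p₋ · (q₋)^{n+1}) / (2^{n+2} · √(s(4+uv))). -/

import Mathlib

open Matrix Finset

def Lm (u : ℕ) : Matrix (Fin 2) (Fin 2) ℕ := !![1, 0; u, 1]
def Rm (v : ℕ) : Matrix (Fin 2) (Fin 2) ℕ := !![1, v; 0, 1]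

/-- The product of the matrices corresponding to a word: `false ↦ L_u`, `true ↦ R_v`. -/
def wordProd (u v : ℕ) (w : List Bool) : Matrix (Fin 2) (Fin 2) ℕ :=
  (w.map (fun b => if b then Rm v else Lm u)).prod

/-- μ of a matrix: maximum of the four entries. -/
def matMax (M : Matrix (Fin 2) (Fin 2) ℕ) : ℕ :=
  max (max (M 0 0) (M 0 1)) (max (M 1 0) (M 1 1))

/-- μ(𝒯^{(u,v)}(I₂;n)): maximum of μ over all products of exactly n matrices each L_u or R_v. -/
def levelMax (u v n : ℕ) : ℕ :=
  Finset.univ.sup (fun w : Fin n → Bool => matMax (wordProd u v (List.ofFn w)))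

/-!
A word acts on row vectors letter by letter: `L_u` sends `(a, b)` to `(a + u b, b)` and `R_v` sends
it to `(a, v a + b)`. For `u, v ≥ 2` the alternating continuations grow so fast that after any
letter it pays to switch letters rather than repeat one; by induction on the word, every entry of a
level is dominated by an entry of one of the alternating products `L R L ⋯`, `R L R ⋯`.
At even length `2k` their largest entry `x_k` satisfies `x_{k+2} = (2 + uv) x_{k+1} - x_k`, whose
characteristic roots are `q₊ / 2` and `q₋ / 2`: the formula is the Binet form of this recurrence.
-/

/- `altX u v m` is the largest entry of the top row of `R_v L_u R_v ⋯` and `altY u v m` that of the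
bottom row of `L_u R_v L_u ⋯` (`m` factors). -/
mutual
def altX (u v : ℕ) : ℕ → ℕ
  | 0 => 1
  | 1 => v
  | m + 2 => altX u v m + v * altY u v (m + 1)
def altY (u v : ℕ) : ℕ → ℕ
  | 0 => 1
  | 1 => u
  | m + 2 => altY u v m + u * altX u v (m + 1)
end

def altWord : Bool → ℕ → List Bool
  | _, 0 => []
  | b, m + 1 => b :: altWord (!b) m

def wordVal (u v : ℕ) (w : List Bool) (a b : ℕ) : ℕ :=
  max ((![a, b] ᵥ* wordProd u v w) 0) ((![a, b] ᵥ* wordProd u v w) 1)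

lemma vecMul_Lm (u a b : ℕ) : ![a, b] ᵥ* Lm u = ![a + u * b, b] := by
  ext i; fin_cases i <;> simp [Lm, vecMul, dotProduct, Fin.sum_univ_two, mul_comm]

lemma vecMul_Rm (v a b : ℕ) : ![a, b] ᵥ* Rm v = ![a, v * a + b] := by
  ext i; fin_cases i <;> simp [Rm, vecMul, dotProduct, Fin.sum_univ_two, mul_comm, add_comm]

@[simp] lemma wordVal_nil (u v a b : ℕ) : wordVal u v [] a b = max a b := by
  simp [wordVal, wordProd]

@[simp] lemma wordVal_cons_false (u v a b : ℕ) (w : List Bool) :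
    wordVal u v (false :: w) a b = wordVal u v w (a + u * b) b := by
  simp [wordVal, wordProd, ← vecMul_vecMul, vecMul_Lm]

@[simp] lemma wordVal_cons_true (u v a b : ℕ) (w : List Bool) :
    wordVal u v (true :: w) a b = wordVal u v w a (v * a + b) := by
  simp [wordVal, wordProd, ← vecMul_vecMul, vecMul_Rm]

lemma matMax_wordProd (u v : ℕ) (w : List Bool) :
    matMax (wordProd u v w) = max (wordVal u v w 1 0) (wordVal u v w 0 1) := by
  simp [matMax, wordVal, vecMul, dotProduct, Fin.sum_univ_two]

lemma matMax_le_levelMax (u v : ℕ) (w : List Bool) :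
    matMax (wordProd u v w) ≤ levelMax u v w.length := by
  unfold levelMax
  simpa using Finset.le_sup
    (f := fun w : Fin w.length → Bool => matMax (wordProd u v (List.ofFn w)))
    (Finset.mem_univ (fun i => w[i]))

@[simp] lemma length_altWord (b : Bool) (m : ℕ) : (altWord b m).length = m := by
  induction m generalizing b <;> simp [altWord, *]

section Alternating

variable {u v : ℕ}

lemma altX_altY_growth (hu : 2 ≤ u) (hv : 2 ≤ v) (m : ℕ) :
    2 * altX u v (m + 1) ≤ v * altY u v (m + 1) + altX u v m ∧
    2 * altY u v (m + 1) ≤ u * altX u v (m + 1) + altY u v m ∧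
    2 * altX u v m ≤ altX u v (m + 1) ∧ 2 * altY u v m ≤ altY u v (m + 1) := by
  induction m with
  | zero => simp only [altX, altY]; refine ⟨?_, ?_, hv, hu⟩ <;> nlinarith
  | succ m ih =>
    obtain ⟨hx, hy, hx', hy'⟩ := ih
    rw [altX, altY]
    refine ⟨?_, ?_, by omega, by omega⟩
    · nlinarith [Nat.mul_le_mul_left v hy]
    · nlinarith [Nat.mul_le_mul_left u hx]

lemma wordVal_altWord (hu : 1 ≤ u) (hv : 1 ≤ v) (m a b : ℕ) :
    wordVal u v (altWord false (m + 1)) a b = altX u v m * a + altY u v (m + 1) * b ∧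
      wordVal u v (altWord true (m + 1)) a b = altX u v (m + 1) * a + altY u v m * b := by
  induction m generalizing a b with
  | zero =>
    simp only [altWord, wordVal_cons_false, wordVal_cons_true, wordVal_nil, altX, altY]
    constructor
    · rw [max_eq_left (by nlinarith)]; ring
    · rw [max_eq_right (by nlinarith)]; ring
  | succ m ih =>
    simp only [altWord, wordVal_cons_false, wordVal_cons_true, Bool.not_false, Bool.not_true]
      at ih ⊢
    rw [(ih _ _).1, (ih _ _).2, altX, altY]
    constructor <;> ring

lemma altX_le_succ (hu : 2 ≤ u) (hv : 2 ≤ v) (m : ℕ) : altX u v m ≤ altX u v (m + 1) := by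
  have := (altX_altY_growth hu hv m).2.2.1; omega

lemma altY_le_succ (hu : 2 ≤ u) (hv : 2 ≤ v) (m : ℕ) : altY u v m ≤ altY u v (m + 1) := by
  have := (altX_altY_growth hu hv m).2.2.2; omega

lemma altY_succ_add_mul_le (hu : 2 ≤ u) (hv : 2 ≤ v) (m : ℕ) :
    altY u v (m + 1) + u * altX u v m ≤ altY u v m + u * altX u v (m + 1) := by
  obtain ⟨-, hy, hx, -⟩ := altX_altY_growth hu hv m
  nlinarith [Nat.mul_le_mul_left u hx]

lemma altX_succ_add_mul_le (hu : 2 ≤ u) (hv : 2 ≤ v) (m : ℕ) :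
    altX u v (m + 1) + v * altY u v m ≤ altX u v m + v * altY u v (m + 1) := by
  obtain ⟨hx, -, -, hy⟩ := altX_altY_growth hu hv m
  nlinarith [Nat.mul_le_mul_left v hy]

lemma wordVal_altWord_false_le_true (hu : 2 ≤ u) (hv : 2 ≤ v) (m a b : ℕ) :
    wordVal u v (altWord false m) (a + u * b) b ≤ wordVal u v (altWord true m) (a + u * b) b := by
  cases m with
  | zero => rfl
  | succ m =>
    obtain ⟨hL, hR⟩ := wordVal_altWord (one_le_two.trans hu) (one_le_two.trans hv) m (a + u * b) b
    rw [hL, hR]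
    nlinarith [Nat.mul_le_mul_right b (altY_succ_add_mul_le hu hv m),
      Nat.mul_le_mul_right a (altX_le_succ hu hv m)]

lemma wordVal_altWord_true_le_false (hu : 2 ≤ u) (hv : 2 ≤ v) (m a b : ℕ) :
    wordVal u v (altWord true m) a (v * a + b) ≤ wordVal u v (altWord false m) a (v * a + b) := by
  cases m with
  | zero => rfl
  | succ m =>
    obtain ⟨hL, hR⟩ := wordVal_altWord (one_le_two.trans hu) (one_le_two.trans hv) m a (v * a + b)
    rw [hL, hR]
    nlinarith [Nat.mul_le_mul_right a (altX_succ_add_mul_le hu hv m),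
      Nat.mul_le_mul_right b (altY_le_succ hu hv m)]

lemma wordVal_le_altWord (hu : 2 ≤ u) (hv : 2 ≤ v) (w : List Bool) (a b : ℕ) :
    wordVal u v w a b ≤
      max (wordVal u v (altWord false w.length) a b) (wordVal u v (altWord true w.length) a b) := by
  induction w generalizing a b with
  | nil => simp [altWord]
  | cons c w ih =>
    cases c
    · calc wordVal u v (false :: w) a b
          ≤ wordVal u v (altWord true w.length) (a + u * b) b := by
            rw [wordVal_cons_false]
            exact (ih _ _).trans (max_le (wordVal_altWord_false_le_true hu hv _ _ _) le_rfl)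
        _ ≤ _ := by simp [altWord]
    · calc wordVal u v (true :: w) a b
          ≤ wordVal u v (altWord false w.length) a (v * a + b) := by
            rw [wordVal_cons_true]
            exact (ih _ _).trans (max_le le_rfl (wordVal_altWord_true_le_false hu hv _ _ _))
        _ ≤ _ := by simp [altWord]

lemma levelMax_succ (hu : 2 ≤ u) (hv : 2 ≤ v) (m : ℕ) :
    levelMax u v (m + 1) = max (altX u v (m + 1)) (altY u v (m + 1)) := by
  obtain ⟨hL₁, hR₁⟩ := wordVal_altWord (one_le_two.trans hu) (one_le_two.trans hv) m 1 0
  obtain ⟨hL₂, hR₂⟩ := wordVal_altWord (one_le_two.trans hu) (one_le_two.trans hv) m 0 1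
  simp only [mul_one, mul_zero, add_zero, zero_add] at hL₁ hR₁ hL₂ hR₂
  apply le_antisymm
  · refine Finset.sup_le fun w _ => ?_
    have h₁ := wordVal_le_altWord hu hv (List.ofFn w) 1 0
    have h₂ := wordVal_le_altWord hu hv (List.ofFn w) 0 1
    rw [List.length_ofFn, hL₁, hR₁] at h₁
    rw [List.length_ofFn, hL₂, hR₂] at h₂
    have := altX_le_succ hu hv m
    have := altY_le_succ hu hv m
    rw [matMax_wordProd]
    omega
  · have hX := matMax_le_levelMax u v (altWord true (m + 1))
    have hY := matMax_le_levelMax u v (altWord false (m + 1))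
    rw [matMax_wordProd, length_altWord] at hX hY
    omega

end Alternating

lemma altX_two_mul_eq_altY (u v k : ℕ) :
    altX u v (2 * k) = altY u v (2 * k) ∧ u * altX u v (2 * k + 1) = v * altY u v (2 * k + 1) := by
  induction k with
  | zero => exact ⟨rfl, Nat.mul_comm u v⟩
  | succ k ih =>
    obtain ⟨h₀, h₁⟩ := ih
    have h₂ : altX u v (2 * k + 2) = altY u v (2 * k + 2) := by rw [altX, altY, h₀, h₁]
    refine ⟨h₂, ?_⟩
    have hx : altX u v (2 * k + 3) = altX u v (2 * k + 1) + v * altY u v (2 * k + 2) := by rw [altX]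
    have hy : altY u v (2 * k + 3) = altY u v (2 * k + 1) + u * altX u v (2 * k + 2) := by rw [altY]
    rw [show 2 * (k + 1) + 1 = 2 * k + 3 by ring, hx, hy, h₂]
    linear_combination h₁

lemma altX_two_mul_add_four (u v k : ℕ) :
    altX u v (2 * k + 4) + altX u v (2 * k) = (2 + u * v) * altX u v (2 * k + 2) := by
  have h₂ : altX u v (2 * k + 2) = altX u v (2 * k) + v * altY u v (2 * k + 1) := by rw [altX]
  have h₄ : altX u v (2 * k + 4) = altX u v (2 * k + 2) + v * altY u v (2 * k + 3) := by rw [altX]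
  have h₃ : altY u v (2 * k + 3) = altY u v (2 * k + 1) + u * altX u v (2 * k + 2) := by rw [altY]
  rw [h₄, h₃, h₂]
  ring

lemma eq_of_second_order_recurrence {R : Type*} [CommSemiring R] {a b : R} {x y : ℕ → R}
    (hx : ∀ k, x (k + 2) = a * x (k + 1) + b * x k) (hy : ∀ k, y (k + 2) = a * y (k + 1) + b * y k)
    (h₀ : x 0 = y 0) (h₁ : x 1 = y 1) : x = y := by
  let E : LinearRecurrence R := ⟨2, ![b, a]⟩
  have hsol : ∀ z : ℕ → R, (∀ k, z (k + 2) = a * z (k + 1) + b * z k) → E.IsSolution z :=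
    fun z hz k => by simp [E, Fin.sum_univ_two, hz, add_comm]
  refine (E.eq_iff_eqOn_range_order x y (hsol x hx) (hsol y hy)).2 fun n hn => ?_
  have : n < 2 := by simpa [E] using hn
  interval_cases n <;> assumption

lemma Real.mul_sqrt_mul_sqrt_eq {s t p : ℝ} (hs : 0 ≤ s) (ht : 0 ≤ t) (hp : 0 ≤ p)
    (hst : s * t = p) :
    s * √t * √(p * (4 + p)) = p * √(s * (4 + p)) := calc
  s * √t * √(p * (4 + p)) = √(s ^ 2 * t * (p * (4 + p))) := by
    rw [Real.sqrt_mul' (s ^ 2 * t) (by positivity), Real.sqrt_mul' _ ht, Real.sqrt_sq hs]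
  _ = √(p ^ 2 * (s * (4 + p))) := by rw [← hst]; ring_nf
  _ = p * √(s * (4 + p)) := by rw [Real.sqrt_mul (by positivity), Real.sqrt_sq hp]

lemma two_pow_mul_sqrt_mul_altX {u v s t : ℕ} (hst : s * t = u * v) {pp pm qp qm : ℝ}
    (hpp : pp = s * √t + √(s * (4 + u * v))) (hpm : pm = -(s * √t) + √(s * (4 + u * v)))
    (hqp : qp = 2 + u * v + √(u * v * (4 + u * v))) (hqm : qm = 2 + u * v - √(u * v * (4 + u * v)))
    (k : ℕ) :
    2 ^ (k + 1) * √(s * (4 + u * v)) * (altX u v (2 * k) : ℝ) = pp * qp ^ k + pm * qm ^ k := by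
  have hst' : (s : ℝ) * t = u * v := by exact_mod_cast hst
  set c : ℝ := (u : ℝ) * v
  set E := √(c * (4 + c))
  have hE : E ^ 2 = c * (4 + c) := Real.sq_sqrt (by positivity)
  have hroot : ∀ q, (q - (2 + c)) ^ 2 = E ^ 2 → q ^ 2 = 2 * (2 + c) * q - 4 := fun q hq => by
    linear_combination hq + hE
  have hqp2 := hroot qp (by rw [hqp]; ring)
  have hqm2 := hroot qm (by rw [hqm]; ring)
  refine congrFun (eq_of_second_order_recurrence (a := 2 * (2 + c)) (b := -4)
    (x := fun k => 2 ^ (k + 1) * √((s : ℝ) * (4 + c)) * altX u v (2 * k))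
    (y := fun k => pp * qp ^ k + pm * qm ^ k) ?_ ?_ ?_ ?_) k
  · intro k
    have h : ((altX u v (2 * k + 4) + altX u v (2 * k) : ℕ) : ℝ)
        = ((2 + u * v) * altX u v (2 * k + 2) : ℕ) := congrArg _ (altX_two_mul_add_four u v k)
    push_cast at h
    rw [show 2 * (k + 2) = 2 * k + 4 by ring, show 2 * (k + 1) = 2 * k + 2 by ring]
    linear_combination 2 ^ (k + 3) * √((s : ℝ) * (4 + c)) * h
  · intro k
    linear_combination pp * qp ^ k * hqp2 + pm * qm ^ k * hqm2
  · simp only [altX, hpp, hpm]; push_cast; ring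
  · have h := Real.mul_sqrt_mul_sqrt_eq (Nat.cast_nonneg s) (Nat.cast_nonneg t) (by positivity) hst'
    simp only [altX, altY, hpp, hpm, hqp, hqm]
    push_cast
    linear_combination -2 * h

theorem stmt2 (u v : ℕ) (hmin : 2 ≤ min u v) (n : ℕ)
    (s t : ℕ) (hs : s = min u v) (ht : t = max u v)
    (pp pm qp qm : ℝ)
    (hpp : pp = (s : ℝ) * Real.sqrt t + Real.sqrt ((s : ℝ) * (4 + (u : ℝ) * v)))
    (hpm : pm = -((s : ℝ) * Real.sqrt t) + Real.sqrt ((s : ℝ) * (4 + (u : ℝ) * v)))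
    (hqp : qp = 2 + (u : ℝ) * v + Real.sqrt ((u : ℝ) * v * (4 + (u : ℝ) * v)))
    (hqm : qm = 2 + (u : ℝ) * v - Real.sqrt ((u : ℝ) * v * (4 + (u : ℝ) * v))) :
    (levelMax u v (2 * n + 2) : ℝ) =
      (pp * qp ^ (n + 1) + pm * qm ^ (n + 1)) /
        (2 ^ (n + 2) * Real.sqrt ((s : ℝ) * (4 + (u : ℝ) * v))) := by
  have hu : 2 ≤ u := hmin.trans (min_le_left u v)
  have hv : 2 ≤ v := hmin.trans (min_le_right u v)
  have hst : s * t = u * v := by rw [hs, ht, min_mul_max]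
  have hlevel : levelMax u v (2 * n + 2) = altX u v (2 * (n + 1)) := by
    rw [levelMax_succ hu hv, show 2 * n + 1 + 1 = 2 * (n + 1) by ring,
      ← (altX_two_mul_eq_altY u v (n + 1)).1, max_self]
  have hsqrt : 0 < √((s : ℝ) * (4 + (u : ℝ) * v)) := Real.sqrt_pos.2 (by subst hs; positivity)
  rw [hlevel, ← two_pow_mul_sqrt_mul_altX hst hpp hpm hqp hqm (n + 1)]
  field_simp
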